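/- Let I ⊆ ℝ be an open interval and U, h₀, h₁ : I → ℝ differentiable functions. Set C(p,q) = p²/2 + U(q) and g(p,q) = p·h₁(q) + h₀(q). If the Poisson bracket satisfies {C,g}(p,q) = C(p,q) for all (p,q) ∈ ℝ × I, then h₀ is constant and there exists c₂ ∈ ℝ such that h₁(q) = (q + c₂)/2 and (q + c₂)·U'(q) = −2·U(q) for all q ∈ I; consequently, if q + c₂ ≠ 0 on I, there exists c₁ ∈ ℝ with U(q) = c₁·(q + c₂)⁻² for all q ∈ I. -/

import Mathlib

/-- Poisson bracket on ℝ² with canonical coordinates (p,q):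
`{f,g} = (∂f/∂p)(∂g/∂q) − (∂f/∂q)(∂g/∂p)`. -/
noncomputable def poissonBracket (f g : ℝ → ℝ → ℝ) : ℝ → ℝ → ℝ := fun p q =>
  deriv (fun p' => f p' q) p * deriv (fun q' => g p q') q -
  deriv (fun q' => f p q') q * deriv (fun p' => g p' q) p

private lemma const_on_Ioo {a b : ℝ} {f : ℝ → ℝ}
    (hf : ∀ q ∈ Set.Ioo a b, DifferentiableAt ℝ f q)
    (h0 : ∀ q ∈ Set.Ioo a b, deriv f q = 0) :
    ∀ x ∈ Set.Ioo a b, ∀ y ∈ Set.Ioo a b, f x = f y := by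
  intro x hx y hy
  refine (convex_Ioo a b).is_const_of_fderivWithin_eq_zero
    (fun z hz => (hf z hz).differentiableWithinAt) (fun z hz => ?_) hx hy
  rw [fderivWithin_of_isOpen isOpen_Ioo hz]
  ext
  have : deriv f z = 0 := h0 z hz
  simp [← toSpanSingleton_deriv, this]

/-- Lemma (b): if `{C, p·h₁(q) + h₀(q)} = C` with `C = p²/2 + U(q)`, then `h₀` is
constant, `h₁(q) = (q+c₂)/2`, `(q+c₂)U' = −2U`, and hence `U = c₁(q+c₂)⁻²`
wherever `q + c₂ ≠ 0`. -/
theorem bracket_eq_C_forces_inverse_square_U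
    (a b : ℝ) (hab : a < b)
    (U h₀ h₁ : ℝ → ℝ)
    (hU : ∀ q ∈ Set.Ioo a b, DifferentiableAt ℝ U q)
    (hh₀ : ∀ q ∈ Set.Ioo a b, DifferentiableAt ℝ h₀ q)
    (hh₁ : ∀ q ∈ Set.Ioo a b, DifferentiableAt ℝ h₁ q)
    (C g : ℝ → ℝ → ℝ)
    (hC : ∀ p q : ℝ, C p q = p ^ 2 / 2 + U q)
    (hg : ∀ p q : ℝ, g p q = p * h₁ q + h₀ q)
    (hbr : ∀ p : ℝ, ∀ q ∈ Set.Ioo a b, poissonBracket C g p q = C p q) :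
    (∃ k : ℝ, ∀ q ∈ Set.Ioo a b, h₀ q = k) ∧
    ∃ c₂ : ℝ,
      (∀ q ∈ Set.Ioo a b,
        h₁ q = (q + c₂) / 2 ∧ (q + c₂) * deriv U q = -2 * U q) ∧
      ((∀ q ∈ Set.Ioo a b, q + c₂ ≠ 0) →
        ∃ c₁ : ℝ, ∀ q ∈ Set.Ioo a b, U q = c₁ * ((q + c₂) ^ 2)⁻¹) := by
  -- Step 1: explicit form of the bracket equation
  have key : ∀ p : ℝ, ∀ q ∈ Set.Ioo a b,
      p * (p * deriv h₁ q + deriv h₀ q) - deriv U q * h₁ q = p ^ 2 / 2 + U q := by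
    intro p q hq
    have e1 : deriv (fun p' => C p' q) p = p := by
      have : (fun p' => C p' q) = fun p' => p' ^ 2 / 2 + U q := by
        funext p'; exact hC p' q
      rw [this]
      have h := ((hasDerivAt_pow 2 p).div_const 2).add_const (U q)
      rw [h.deriv]; ring
    have e2 : deriv (fun q' => g p q') q = p * deriv h₁ q + deriv h₀ q := by
      have : (fun q' => g p q') = fun q' => p * h₁ q' + h₀ q' := by
        funext q'; exact hg p q'
      rw [this]
      have h := (((hh₁ q hq).hasDerivAt.const_mul p).add (hh₀ q hq).hasDerivAt)
      exact h.deriv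
    have e3 : deriv (fun q' => C p q') q = deriv U q := by
      have : (fun q' => C p q') = fun q' => p ^ 2 / 2 + U q' := by
        funext q'; exact hC p q'
      rw [this]
      exact ((hU q hq).hasDerivAt.const_add (p ^ 2 / 2)).deriv
    have e4 : deriv (fun p' => g p' q) p = h₁ q := by
      have : (fun p' => g p' q) = fun p' => p' * h₁ q + h₀ q := by
        funext p'; exact hg p' q
      rw [this]
      have h := ((hasDerivAt_id p).mul_const (h₁ q)).add_const (h₀ q)
      simp only [id] at h
      rw [h.deriv]; ring
    have hb := hbr p q hq
    rw [poissonBracket, e1, e2, e3, e4, hC] at hb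
    exact hb
  -- Step 2: pointwise consequences
  have hd0 : ∀ q ∈ Set.Ioo a b, deriv h₀ q = 0 := by
    intro q hq
    have k1 := key 1 q hq
    have k2 := key (-1) q hq
    nlinarith [k1, k2]
  have hd1 : ∀ q ∈ Set.Ioo a b, deriv h₁ q = 1 / 2 := by
    intro q hq
    have k0 := key 0 q hq
    have k1 := key 1 q hq
    have k2 := key (-1) q hq
    nlinarith [k0, k1, k2]
  have hUh : ∀ q ∈ Set.Ioo a b, deriv U q * h₁ q = -U q := by
    intro q hq
    have k0 := key 0 q hq
    nlinarith [k0]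
  set x0 : ℝ := (a + b) / 2 with hx0def
  have hx0 : x0 ∈ Set.Ioo a b := ⟨by linarith, by linarith⟩
  constructor
  · exact ⟨h₀ x0, fun q hq => const_on_Ioo hh₀ hd0 q hq x0 hx0⟩
  · refine ⟨2 * h₁ x0 - x0, ?_, ?_⟩
    · -- h₁ q = (q + c₂)/2 and ODE
      have hform : ∀ q ∈ Set.Ioo a b, h₁ q = (q + (2 * h₁ x0 - x0)) / 2 := by
        have hdiff : ∀ q ∈ Set.Ioo a b, DifferentiableAt ℝ (fun t => h₁ t - t / 2) q :=
          fun q hq => (hh₁ q hq).sub ((differentiableAt_id).div_const 2)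
        have hz : ∀ q ∈ Set.Ioo a b, deriv (fun t => h₁ t - t / 2) q = 0 := by
          intro q hq
          have h := ((hh₁ q hq).hasDerivAt.sub ((hasDerivAt_id q).div_const 2))
          simp only [id] at h
          exact h.deriv.trans (by rw [hd1 q hq]; ring)
        intro q hq
        have := const_on_Ioo hdiff hz q hq x0 hx0
        linarith
      intro q hq
      refine ⟨hform q hq, ?_⟩
      have h1 := hUh q hq
      have h2 := hform q hq
      linear_combination 2 * h1 - 2 * deriv U q * h2
    · -- inverse square law
      intro hne
      refine ⟨U x0 * (x0 + (2 * h₁ x0 - x0)) ^ 2, ?_⟩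
      set c₂ : ℝ := 2 * h₁ x0 - x0 with hc2
      have hform : ∀ q ∈ Set.Ioo a b, (q + c₂) * deriv U q = -2 * U q := by
        intro q hq
        have h1 := hUh q hq
        have hdiff : ∀ q ∈ Set.Ioo a b, DifferentiableAt ℝ (fun t => h₁ t - t / 2) q :=
          fun q hq => (hh₁ q hq).sub ((differentiableAt_id).div_const 2)
        have hz : ∀ q ∈ Set.Ioo a b, deriv (fun t => h₁ t - t / 2) q = 0 := by
          intro q hq
          have h := ((hh₁ q hq).hasDerivAt.sub ((hasDerivAt_id q).div_const 2))
          simp only [id] at h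
          exact h.deriv.trans (by rw [hd1 q hq]; ring)
        have h2 := const_on_Ioo hdiff hz q hq x0 hx0
        linear_combination 2 * h1 - 2 * deriv U q * h2 + deriv U q * hc2
      have hdiffF : ∀ q ∈ Set.Ioo a b,
          DifferentiableAt ℝ (fun t => U t * (t + c₂) ^ 2) q := by
        intro q hq
        exact (hU q hq).mul (((differentiableAt_id).add_const c₂).pow 2)
      have hzF : ∀ q ∈ Set.Ioo a b, deriv (fun t => U t * (t + c₂) ^ 2) q = 0 := by
        intro q hq
        have hd : HasDerivAt (fun t => U t * (t + c₂) ^ 2)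
            (deriv U q * (q + c₂) ^ 2 + U q * (2 * (q + c₂))) q := by
          have h1 : HasDerivAt (fun t : ℝ => (t + c₂) ^ 2) (2 * (q + c₂)) q := by
            have := ((hasDerivAt_id q).add_const c₂).pow 2
            exact this.congr_deriv (by norm_num)
          exact (hU q hq).hasDerivAt.mul h1
        rw [hd.deriv]
        have := hform q hq
        linear_combination (q + c₂) * this
      intro q hq
      have hc := const_on_Ioo hdiffF hzF q hq x0 hx0
      have hq0 : (q + c₂) ^ 2 ≠ 0 := pow_ne_zero 2 (hne q hq)
      rw [eq_mul_inv_iff_mul_eq₀ hq0]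
      linear_combination hc
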